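/- arXiv:1901.04537 — 3 statements merged into one kernel-verified Lean document; each statement's English description precedes it below -/
import Mathlib

section
/- Let X be a compact zero-dimensional Hausdorff space. Then every Boolean homomorphism φ : CO(X) → 2 is of the form x̂ for a (unique) point x ∈ X, i.e., the intersection ⋂ { U ∈ CO(X) : φ(U) = 1 } is a singleton {x} and φ(U) = 1 ⟺ x ∈ U. -/
/-!
The clopen sets on which `φ` holds are closed under finite intersections and nonempty, so by
compactness they have a common point `x`. Since `φ` respects complements, `φ U ↔ x ∈ U` for
every clopen `U`; and since clopen sets separate points, the clopen sets containing `x`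
intersect in `{x}` alone.
-/

open Set

section ClopenUltrafilter

variable {X : Type*} [TopologicalSpace X] {φ : Set X → Prop}

theorem nonempty_sInter_isClopen_of_inter_iff [CompactSpace X]
    (hinter : ∀ U V : Set X, IsClopen U → IsClopen V → (φ (U ∩ V) ↔ (φ U ∧ φ V)))
    (hbot : ¬ φ ∅) (htop : φ univ) :
    (⋂₀ {U : Set X | IsClopen U ∧ φ U}).Nonempty := by
  have : Nonempty {U : Set X | IsClopen U ∧ φ U} := ⟨⟨univ, isClopen_univ, htop⟩⟩
  refine IsCompact.nonempty_sInter_of_directed_nonempty_isCompact_isClosed ?_ ?_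
    (fun U hU => hU.1.isClosed.isCompact) (fun U hU => hU.1.isClosed)
  · rintro U ⟨hU, hφU⟩ V ⟨hV, hφV⟩
    exact ⟨U ∩ V, ⟨hU.inter hV, (hinter U V hU hV).2 ⟨hφU, hφV⟩⟩,
      inter_subset_left, inter_subset_right⟩
  · rintro U ⟨-, hφU⟩
    exact nonempty_iff_ne_empty.2 fun h => hbot (h ▸ hφU)

theorem iff_mem_of_mem_sInter_isClopen (hcompl : ∀ U : Set X, IsClopen U → (φ Uᶜ ↔ ¬ φ U))
    {x : X} (hx : x ∈ ⋂₀ {U : Set X | IsClopen U ∧ φ U}) (U : Set X) (hU : IsClopen U) :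
    φ U ↔ x ∈ U := by
  refine ⟨fun hφU => hx U ⟨hU, hφU⟩, fun hxU => by_contra fun hφU => ?_⟩
  exact hx Uᶜ ⟨hU.compl, (hcompl U hU).2 hφU⟩ hxU

theorem sInter_isClopen_mem_eq_singleton [T1Space X]
    (hzd : ∀ (x : X) (U : Set X), IsOpen U → x ∈ U → ∃ V : Set X, IsClopen V ∧ x ∈ V ∧ V ⊆ U)
    (x : X) : ⋂₀ {U : Set X | IsClopen U ∧ x ∈ U} = {x} := by
  refine eq_singleton_iff_unique_mem.2 ⟨fun U hU => hU.2, fun y hy => by_contra fun hyx => ?_⟩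
  obtain ⟨V, hV, hxV, hVy⟩ := hzd x {y}ᶜ isOpen_compl_singleton (Ne.symm hyx)
  exact hVy (hy V ⟨hV, hxV⟩) rfl

end ClopenUltrafilter

theorem stmt15_general {X : Type*} [TopologicalSpace X] [CompactSpace X] [T2Space X]
    (hzd : ∀ (x : X) (U : Set X), IsOpen U → x ∈ U →
      ∃ V : Set X, IsClopen V ∧ x ∈ V ∧ V ⊆ U)
    (φ : Set X → Prop)
    (hinter : ∀ U V : Set X, IsClopen U → IsClopen V → (φ (U ∩ V) ↔ (φ U ∧ φ V)))
    (hcompl : ∀ U : Set X, IsClopen U → (φ Uᶜ ↔ ¬ φ U))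
    (hbot : ¬ φ ∅) (htop : φ Set.univ) :
    ∃! x : X, (⋂₀ {U : Set X | IsClopen U ∧ φ U} = {x}) ∧
      ∀ U : Set X, IsClopen U → (φ U ↔ x ∈ U) := by
  obtain ⟨x, hx⟩ := nonempty_sInter_isClopen_of_inter_iff hinter hbot htop
  have hφ := iff_mem_of_mem_sInter_isClopen hcompl hx
  have hsing : ⋂₀ {U : Set X | IsClopen U ∧ φ U} = {x} := by
    rw [← sInter_isClopen_mem_eq_singleton hzd x]
    exact congrArg sInter (ext fun U => and_congr_right (hφ U))
  exact ⟨x, ⟨hsing, hφ⟩, fun y hy => singleton_eq_singleton_iff.1 (hy.1.symm.trans hsing)⟩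

/-- For a compact zero-dimensional Hausdorff space `X`, every Boolean
homomorphism `φ : CO(X) → 2` equals `x̂` for a unique point `x`: the intersection
`⋂ { U clopen : φ U }` is the singleton `{x}` and `φ U ↔ x ∈ U` for all clopen `U`. -/
theorem stmt15 {X : Type*} [TopologicalSpace X] [CompactSpace X] [T2Space X]
    (hzd : ∀ (x : X) (U : Set X), IsOpen U → x ∈ U →
      ∃ V : Set X, IsClopen V ∧ x ∈ V ∧ V ⊆ U)
    (φ : Set X → Prop)
    (hinter : ∀ U V : Set X, IsClopen U → IsClopen V → (φ (U ∩ V) ↔ (φ U ∧ φ V)))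
    (hunion : ∀ U V : Set X, IsClopen U → IsClopen V → (φ (U ∪ V) ↔ (φ U ∨ φ V)))
    (hcompl : ∀ U : Set X, IsClopen U → (φ Uᶜ ↔ ¬ φ U))
    (hbot : ¬ φ ∅) (htop : φ Set.univ) :
    ∃! x : X, (⋂₀ {U : Set X | IsClopen U ∧ φ U} = {x}) ∧
      ∀ U : Set X, IsClopen U → (φ U ↔ x ∈ U) :=
  stmt15_general hzd φ hinter hcompl hbot htop
end

section
/- Let A be a Boolean algebra and α : A → B a z-map into a complete atomic Boolean algebra B (α is an injective Boolean homomorphism such that every atom of B is a meet of elements of α(A)). Then the set X_α = { α_x : x ∈ At(B) } is dense in the Stone space S(A). -/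
/-- A Boolean homomorphism into the two-element Boolean algebra `2`, modeled as `Prop`. -/
def IsBoolHom2' {A : Type*} [BooleanAlgebra A] (f : A → Prop) : Prop :=
  (∀ a b : A, f (a ⊓ b) = (f a ∧ f b)) ∧
  (∀ a b : A, f (a ⊔ b) = (f a ∨ f b)) ∧
  (∀ a : A, f aᶜ = ¬ f a) ∧
  (f ⊥ = False) ∧ (f ⊤ = True)

theorem atom_le_sup' {B : Type*} [CompleteBooleanAlgebra B] {x u v : B} (hx : IsAtom x)
    (h : x ≤ u ⊔ v) : x ≤ u ∨ x ≤ v := by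
  by_contra hc
  push_neg at hc
  have h1 : x ⊓ u = ⊥ := (hx.le_iff.mp inf_le_left).resolve_right
    (fun he => hc.1 (he ▸ inf_le_right))
  have h2 : x ⊓ v = ⊥ := (hx.le_iff.mp inf_le_left).resolve_right
    (fun he => hc.2 (he ▸ inf_le_right))
  have : x = ⊥ := by
    have := inf_sup_left x u v
    rw [h1, h2, sup_idem, inf_eq_left.mpr h] at this
    simpa using this
  exact hx.1 this

theorem atom_le_compl' {B : Type*} [CompleteBooleanAlgebra B] {x u : B} (hx : IsAtom x) :
    x ≤ uᶜ ↔ ¬ x ≤ u := by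
  constructor
  · intro h h'
    exact hx.1 (le_bot_iff.mp (le_inf h' h |>.trans_eq (inf_compl_eq_bot)))
  · intro h
    rcases hx.le_iff.mp (inf_le_left : x ⊓ u ≤ x) with hb | he
    · exact le_compl_iff_disjoint_right.mpr (disjoint_iff.mpr hb)
    · exact absurd (he ▸ inf_le_right) h

/-- For a z-map `α : A → B` into a complete atomic Boolean algebra
(an injective Boolean homomorphism such that every atom of `B` is a meet of
elements of `α(A)`), the set `X_α = { α_x : x ∈ At(B) }` is dense in the Stone
space `S(A)`. -/
theorem stmt16 {A B : Type*} [BooleanAlgebra A] [CompleteBooleanAlgebra B]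
    (hatomic : ∀ b : B, b ≠ ⊥ → ∃ a, IsAtom a ∧ a ≤ b)
    (α : A → B)
    (hinj : Function.Injective α)
    (hinf : ∀ a b, α (a ⊓ b) = α a ⊓ α b)
    (hsup : ∀ a b, α (a ⊔ b) = α a ⊔ α b)
    (hcompl : ∀ a, α aᶜ = (α a)ᶜ)
    (hbot : α ⊥ = ⊥) (htop : α ⊤ = ⊤)
    (hmeet : ∀ x : B, IsAtom x → ∃ S : Set A, x = sInf (α '' S)) :
    @Dense {f : A → Prop // IsBoolHom2' f}
      (TopologicalSpace.generateFrom
        {S : Set {f : A → Prop // IsBoolHom2' f} |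
          ∃ a : A, S = {f : {g : A → Prop // IsBoolHom2' g} | (f : A → Prop) a}})
      {f : {g : A → Prop // IsBoolHom2' g} |
        ∃ x : B, IsAtom x ∧ (f : A → Prop) = fun a => (x ≤ α a : Prop)} := by
  set basis : Set (Set {f : A → Prop // IsBoolHom2' f}) :=
    {S : Set {f : A → Prop // IsBoolHom2' f} |
      ∃ a : A, S = {f : {g : A → Prop // IsBoolHom2' g} | (f : A → Prop) a}} with hbasis
  letI τ := TopologicalSpace.generateFrom basis
  rw [dense_iff_inter_open]
  intro U hU ⟨f, hfU⟩
  -- every open set containing f contains a basic open set containing f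
  have key : ∀ V, TopologicalSpace.GenerateOpen basis V → ∀ g ∈ V, ∃ a : A,
      (g : A → Prop) a ∧
      {h : {h : A → Prop // IsBoolHom2' h} | (h : A → Prop) a} ⊆ V := by
    intro V hV
    induction hV with
    | basic S hS =>
        obtain ⟨a, rfl⟩ := hS
        exact fun g hg => ⟨a, hg, subset_rfl⟩
    | univ =>
        intro g _
        refine ⟨⊤, ?_, fun _ _ => trivial⟩
        rw [g.2.2.2.2.2]; trivial
    | inter V W _ _ ihV ihW =>
        intro g hg
        obtain ⟨a, ha, hsa⟩ := ihV g hg.1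
        obtain ⟨b, hb, hsb⟩ := ihW g hg.2
        refine ⟨a ⊓ b, ?_, fun h hh => ?_⟩
        · rw [g.2.1]; exact ⟨ha, hb⟩
        · have h2 : (h : A → Prop) (a ⊓ b) := hh
          rw [h.2.1] at h2
          exact ⟨hsa h2.1, hsb h2.2⟩
    | sUnion S _ ih =>
        intro g hg
        obtain ⟨T, hT, hgT⟩ := hg
        obtain ⟨a, ha, hsa⟩ := ih T hT g hgT
        exact ⟨a, ha, hsa.trans (Set.subset_sUnion_of_mem hT)⟩
  obtain ⟨a, hfa, hsa⟩ := key U hU f hfU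
  -- a ≠ ⊥
  have ha : a ≠ ⊥ := by
    rintro rfl
    rw [f.2.2.2.2.1] at hfa
    exact hfa
  have hαa : α a ≠ ⊥ := fun h => ha (hinj (h.trans hbot.symm))
  obtain ⟨x, hx, hxa⟩ := hatomic (α a) hαa
  -- the point α_x
  have hhom : IsBoolHom2' (fun b => (x ≤ α b : Prop)) := by
    refine ⟨?_, ?_, ?_, ?_, ?_⟩
    · intro a b
      show (x ≤ α (a ⊓ b)) = _
      rw [hinf]
      exact propext le_inf_iff
    · intro a b
      show (x ≤ α (a ⊔ b)) = _
      rw [hsup]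
      exact propext ⟨fun h => atom_le_sup' hx h, fun h => h.elim (fun h => h.trans le_sup_left)
        (fun h => h.trans le_sup_right)⟩
    · intro a
      show (x ≤ α aᶜ) = _
      rw [hcompl]
      exact propext (atom_le_compl' hx)
    · show (x ≤ α ⊥) = False
      rw [hbot]
      simp [hx.1, le_bot_iff]
    · show (x ≤ α ⊤) = True
      rw [htop]
      simp
  refine ⟨⟨fun b => (x ≤ α b : Prop), hhom⟩, hsa hxa, x, hx, rfl⟩
end

section
/- Let A be a complete Boolean algebra and α : A → B a z-map into a complete atomic Boolean algebra B. Then α is a maximal z-map; that is, with X_α = { α_x : x ∈ At(B) } viewed as a subspace of the Stone space S(A), every clopen subset of X_α is of the form X_α ∩ s_A(a) for some a ∈ A. -/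
/-- If `A` is a complete Boolean algebra and `α : A → B` is a z-map
into a complete atomic Boolean algebra `B`, then `α` is a maximal z-map: with
`X_α = { α_x : x ∈ At(B) }` viewed as a subspace of the Stone space `S(A)`
(topology generated by the sets `s_A a = {f | f a}`), every clopen subset of
`X_α` equals `X_α ∩ s_A a` for some `a ∈ A`. -/
theorem stmt17 {A B : Type*} [CompleteBooleanAlgebra A] [CompleteBooleanAlgebra B]
    (hatomicB : ∀ b : B, b ≠ ⊥ → ∃ a, IsAtom a ∧ a ≤ b)
    (α : A → B)
    (hinj : Function.Injective α)
    (hinf : ∀ a b, α (a ⊓ b) = α a ⊓ α b)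
    (hsup : ∀ a b, α (a ⊔ b) = α a ⊔ α b)
    (hcompl : ∀ a, α aᶜ = (α a)ᶜ)
    (hbot : α ⊥ = ⊥) (htop : α ⊤ = ⊤)
    (hmeet : ∀ x : B, IsAtom x → ∃ S : Set A, x = sInf (α '' S)) :
    ∀ U : Set {f : A → Prop // ∃ x : B, IsAtom x ∧ f = fun a => (x ≤ α a : Prop)},
      @IsClopen _
        (TopologicalSpace.induced Subtype.val
          (TopologicalSpace.generateFrom
            {S : Set (A → Prop) | ∃ a : A, S = {f | f a}})) U →
      ∃ a : A,
        U = {f : {g : A → Prop // ∃ x : B, IsAtom x ∧ g = fun a => (x ≤ α a : Prop)} |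
              (f : A → Prop) a} := by
  intro U hU
  -- α is monotone
  have hmono : ∀ {a b : A}, a ≤ b → α a ≤ α b := by
    intro a b hab
    have h1 : α a = α a ⊓ α b := by rw [← hinf, inf_eq_left.mpr hab]
    rw [h1]; exact inf_le_right
  -- key lemma: in any generated-open set, every point of the form α_x has a
  -- basic neighborhood determined by a single element of A
  have key : ∀ V : Set (A → Prop),
      TopologicalSpace.GenerateOpen {S : Set (A → Prop) | ∃ a : A, S = {f | f a}} V →
      ∀ x : B, (fun c => (x ≤ α c : Prop)) ∈ V →
      ∃ a : A, x ≤ α a ∧ ∀ y : B, y ≤ α a → (fun c => (y ≤ α c : Prop)) ∈ V := by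
    intro V hV
    induction hV with
    | basic S hS =>
      intro x hx
      obtain ⟨a, rfl⟩ := hS
      exact ⟨a, hx, fun y hy => hy⟩
    | univ =>
      intro x _
      exact ⟨⊤, htop ▸ le_top, fun y _ => trivial⟩
    | inter S T hS hT ihS ihT =>
      intro x hx
      obtain ⟨a, hxa, ha⟩ := ihS x hx.1
      obtain ⟨b, hxb, hb⟩ := ihT x hx.2
      refine ⟨a ⊓ b, ?_, ?_⟩
      · rw [hinf]; exact le_inf hxa hxb
      · intro y hy
        rw [hinf, le_inf_iff] at hy
        exact ⟨ha y hy.1, hb y hy.2⟩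
    | sUnion S hS ih =>
      intro x hx
      obtain ⟨T, hT, hxT⟩ := hx
      obtain ⟨a, hxa, ha⟩ := ih T hT x hxT
      exact ⟨a, hxa, fun y hy => ⟨T, hT, ha y hy⟩⟩
  -- extract the open set for U
  obtain ⟨V, hVopen, hVU⟩ := hU.2
  -- extract the open set for Uᶜ
  obtain ⟨W, hWopen, hWU⟩ := hU.1.isOpen_compl
  -- for each g ∈ U pick a basic neighborhood
  have hex : ∀ g : {g : A → Prop // ∃ x : B, IsAtom x ∧ g = fun a => (x ≤ α a : Prop)},
      g ∈ U → ∃ a : A, (g : A → Prop) a ∧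
        ∀ y : B, y ≤ α a → (fun c => (y ≤ α c : Prop)) ∈ V := by
    intro g hg
    obtain ⟨x, hx, hgx⟩ := g.2
    have hgV : (g : A → Prop) ∈ V := by rw [← hVU] at hg; exact hg
    rw [hgx] at hgV
    obtain ⟨a, hxa, ha⟩ := key V hVopen x hgV
    exact ⟨a, by rw [hgx]; exact hxa, ha⟩
  choose aF h1 h2 using hex
  refine ⟨⨆ g, ⨆ hg : g ∈ U, aF g hg, ?_⟩
  ext f
  obtain ⟨x, hx, hfx⟩ := f.2
  simp only [Set.mem_setOf_eq]
  constructor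
  · intro hfU
    have h3 : aF f hfU ≤ ⨆ g, ⨆ hg : g ∈ U, aF g hg :=
      le_iSup₂ (f := fun g hg => aF g hg) f hfU
    have h4 := h1 f hfU
    rw [hfx] at h4 ⊢
    exact h4.trans (hmono h3)
  · intro hfa
    rw [hfx] at hfa
    by_contra hfU
    have hfW : (f : A → Prop) ∈ W := by
      have : f ∈ Uᶜ := hfU
      rw [← hWU] at this; exact this
    rw [hfx] at hfW
    obtain ⟨c, hxc, hc⟩ := key W hWopen x hfW
    have hne : ∃ g, ∃ hg : g ∈ U, aF g hg ⊓ c ≠ ⊥ := by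
      by_contra h
      push_neg at h
      have hle : (⨆ g, ⨆ hg : g ∈ U, aF g hg) ≤ cᶜ := by
        refine iSup₂_le fun g hg => ?_
        exact le_compl_iff_disjoint_right.mpr (disjoint_iff.mpr (h g hg))
      have hxb : x ≤ α c ⊓ (α c)ᶜ :=
        le_inf hxc (by rw [← hcompl]; exact hfa.trans (hmono hle))
      rw [inf_compl_eq_bot] at hxb
      exact hx.1 (le_bot_iff.mp hxb)
    obtain ⟨g, hg, hgc⟩ := hne
    have hαne : α (aF g hg ⊓ c) ≠ ⊥ := fun h => hgc (hinj (h.trans hbot.symm))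
    obtain ⟨z, hz, hzle⟩ := hatomicB _ hαne
    rw [hinf] at hzle
    have gz : {g : A → Prop // ∃ x : B, IsAtom x ∧ g = fun a => (x ≤ α a : Prop)} :=
      ⟨fun b => (z ≤ α b : Prop), z, hz, rfl⟩
    have hzU : (⟨fun b => (z ≤ α b : Prop), z, hz, rfl⟩ :
        {g : A → Prop // ∃ x : B, IsAtom x ∧ g = fun a => (x ≤ α a : Prop)}) ∈ U := by
      rw [← hVU]; exact h2 g hg z (hzle.trans inf_le_left)
    have hzNU : (⟨fun b => (z ≤ α b : Prop), z, hz, rfl⟩ :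
        {g : A → Prop // ∃ x : B, IsAtom x ∧ g = fun a => (x ≤ α a : Prop)}) ∈ Uᶜ := by
      rw [← hWU]; exact hc z (hzle.trans inf_le_right)
    exact hzNU hzU
end
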